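/- arXiv:1312.0986 — 3 statements merged into one kernel-verified Lean document; each statement's English description precedes it below -/
import Mathlib

section
/- Let ω : ℝⁿ → (0,∞) be a positive measurable function that is submultiplicative (ω(x+y) ≤ ω(x)ω(y) for all x,y) and integrable on some neighborhood of the origin. Then ω is exponentially moderate: there exist constants A > 0 and a ≥ 0 such that ω(x+y) ≤ A ω(y) e^{a|x|} for all x, y ∈ ℝⁿ. -/
/-!
Averaging `ω x ≤ ω (x - y) * ω y` against `1 / ω y` over a small ball `B` gives
`ω x * ∫_B 1/ω ≤ ∫_{x - B} ω`, so integrability of `ω` near the origin bounds `ω` by some `C`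
on a ball of radius `r`. Submultiplicativity then gives `ω x ≤ C ^ k` once `x` is a sum of `k`
vectors of norm at most `r`, and `k` can be taken of order `‖x‖ / r`; finally
`ω (x + y) ≤ ω x * ω y`.
-/

open MeasureTheory Metric ENNReal

theorem apply_nsmul_le_pow {M : Type*} [AddMonoid M] {ω : M → ℝ} (hnonneg : ∀ x, 0 ≤ ω x)
    (hsub : ∀ x y, ω (x + y) ≤ ω x * ω y) (y : M) {k : ℕ} (hk : 1 ≤ k) :
    ω (k • y) ≤ ω y ^ k := by
  induction k, hk using Nat.le_induction with
  | base => simp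
  | succ k _ ih =>
    calc ω ((k + 1) • y) ≤ ω (k • y) * ω y := by rw [succ_nsmul]; exact hsub _ _
      _ ≤ ω y ^ k * ω y := mul_le_mul_of_nonneg_right ih (hnonneg y)
      _ = ω y ^ (k + 1) := (pow_succ _ _).symm

theorem le_sq_mul_exp_of_forall_norm_le {E : Type*} [NormedAddCommGroup E] [NormedSpace ℝ E]
    {ω : E → ℝ} (hnonneg : ∀ x, 0 ≤ ω x) (hsub : ∀ x y, ω (x + y) ≤ ω x * ω y) {r C : ℝ}
    (hr : 0 < r) (hC : 1 ≤ C) (hbound : ∀ x, ‖x‖ ≤ r → ω x ≤ C) (x : E) :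
    ω x ≤ C ^ 2 * Real.exp (Real.log C / r * ‖x‖) := by
  set k : ℕ := ⌈‖x‖ / r⌉₊ + 1
  have hk_pos : (0 : ℝ) < k := by positivity
  have hk_lower : ‖x‖ / r ≤ k := by
    have := Nat.le_ceil (‖x‖ / r)
    push_cast [k]
    linarith
  have hk_upper : (k : ℝ) ≤ ‖x‖ / r + 2 := by
    have := Nat.ceil_lt_add_one (div_nonneg (norm_nonneg x) hr.le)
    push_cast [k]
    linarith
  have hpiece : ‖(k : ℝ)⁻¹ • x‖ ≤ r := by
    rw [norm_smul, norm_inv, RCLike.norm_natCast, inv_mul_le_iff₀ hk_pos]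
    rwa [div_le_iff₀ hr] at hk_lower
  have hsplit : k • ((k : ℝ)⁻¹ • x) = x := by
    rw [← Nat.cast_smul_eq_nsmul ℝ, smul_inv_smul₀ hk_pos.ne']
  calc ω x = ω (k • ((k : ℝ)⁻¹ • x)) := by rw [hsplit]
    _ ≤ ω ((k : ℝ)⁻¹ • x) ^ k := apply_nsmul_le_pow hnonneg hsub _ (Nat.le_add_left 1 _)
    _ ≤ C ^ k := pow_le_pow_left₀ (hnonneg _) (hbound _ hpiece) k
    _ = C ^ (k : ℝ) := (Real.rpow_natCast C k).symm
    _ ≤ C ^ (‖x‖ / r + 2) := Real.rpow_le_rpow_of_exponent_le hC hk_upper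
    _ = C ^ 2 * Real.exp (Real.log C / r * ‖x‖) := by
      rw [Real.rpow_add (by linarith), Real.rpow_two, Real.rpow_def_of_pos (by linarith)]
      ring_nf

theorem ofReal_mul_setLIntegral_inv_le {G : Type*} [AddGroup G] [MeasurableSpace G]
    {μ : Measure G} {ω : G → ℝ} (hpos : ∀ x, 0 < ω x)
    (hsub : ∀ x y, ω (x + y) ≤ ω x * ω y) (x : G) (s : Set G) :
    ENNReal.ofReal (ω x) * ∫⁻ y in s, ENNReal.ofReal (ω y)⁻¹ ∂μ ≤
      ∫⁻ y in s, ENNReal.ofReal (ω (x - y)) ∂μ := by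
  rw [← lintegral_const_mul' _ _ ofReal_ne_top]
  refine lintegral_mono fun y => ?_
  rw [← ENNReal.ofReal_mul (hpos x).le]
  refine ENNReal.ofReal_le_ofReal ((mul_inv_le_iff₀ (hpos y)).mpr ?_)
  simpa using hsub (x - y) y

section LocalBound

variable {E : Type*} [NormedAddCommGroup E] [MeasurableSpace E] [BorelSpace E] {μ : Measure E}
  [μ.IsAddLeftInvariant] [μ.IsNegInvariant]

theorem setLIntegral_closedBall_comp_sub_le (f : E → ℝ≥0∞) (x : E) (r : ℝ) :
    ∫⁻ y in closedBall 0 r, f (x - y) ∂μ ≤ ∫⁻ z in closedBall 0 (‖x‖ + r), f z ∂μ := by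
  rw [(Measure.measurePreserving_sub_left μ x).setLIntegral_comp_emb
    (MeasurableEquiv.subLeft x).measurableEmbedding]
  refine lintegral_mono_set ?_
  rintro _ ⟨y, hy, rfl⟩
  rw [mem_closedBall_zero_iff] at hy ⊢
  exact (norm_sub_le x y).trans (by linarith)

theorem exists_forall_norm_le_of_integrableOn_closedBall [μ.IsOpenPosMeasure] {ω : E → ℝ}
    (hpos : ∀ x, 0 < ω x) (hmeas : Measurable ω)
    (hsub : ∀ x y, ω (x + y) ≤ ω x * ω y) {r : ℝ} (hr : 0 < r)
    (hint : IntegrableOn ω (closedBall 0 (2 * r)) μ) :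
    ∃ C, ∀ x, ‖x‖ ≤ r → ω x ≤ C := by
  set I := ∫⁻ y in closedBall 0 r, ENNReal.ofReal (ω y)⁻¹ ∂μ
  set K := ∫⁻ z in closedBall 0 (2 * r), ENNReal.ofReal (ω z) ∂μ
  have hK : K ≠ ⊤ := hint.lintegral_lt_top.ne
  have hbound : ∀ x : E, ‖x‖ ≤ r → ENNReal.ofReal (ω x) * I ≤ K := fun x hx =>
    calc ENNReal.ofReal (ω x) * I ≤ ∫⁻ y in closedBall 0 r, ENNReal.ofReal (ω (x - y)) ∂μ :=
          ofReal_mul_setLIntegral_inv_le hpos hsub x _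
      _ ≤ ∫⁻ z in closedBall 0 (‖x‖ + r), ENNReal.ofReal (ω z) ∂μ :=
          setLIntegral_closedBall_comp_sub_le _ x r
      _ ≤ K := lintegral_mono_set (closedBall_subset_closedBall (by linarith))
  have hI_ne_zero : I ≠ 0 := by
    refine ((setLIntegral_pos_iff (f := fun y => ENNReal.ofReal (ω y)⁻¹)
      hmeas.inv.ennreal_ofReal).mpr ?_).ne'
    rw [Function.support_eq_univ fun y => (ofReal_pos.mpr (inv_pos.mpr (hpos y))).ne',
      Set.univ_inter]
    exact measure_closedBall_pos μ 0 hr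
  have hI_ne_top : I ≠ ⊤ := fun hI => by
    have := hbound 0 (by simpa using hr.le)
    rw [hI, mul_top (ofReal_pos.mpr (hpos 0)).ne', top_le_iff] at this
    exact hK this
  refine ⟨(K / I).toReal, fun x hx => ?_⟩
  rw [← ofReal_le_iff_le_toReal (div_ne_top hK hI_ne_zero),
    ENNReal.le_div_iff_mul_le (Or.inl hI_ne_zero) (Or.inl hI_ne_top)]
  exact hbound x hx

end LocalBound

/-- A positive measurable submultiplicative function that is integrable near the origin
is exponentially moderate. -/
theorem submultiplicative_is_exponentially_moderate {n : ℕ}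
    (ω : EuclideanSpace ℝ (Fin n) → ℝ)
    (hpos : ∀ x, 0 < ω x) (hmeas : Measurable ω)
    (hsub : ∀ x y, ω (x + y) ≤ ω x * ω y)
    (hint : ∃ U ∈ nhds (0 : EuclideanSpace ℝ (Fin n)), IntegrableOn ω U volume) :
    ∃ A > (0 : ℝ), ∃ a ≥ (0 : ℝ), ∀ x y, ω (x + y) ≤ A * ω y * Real.exp (a * ‖x‖) := by
  obtain ⟨U, hU, hintU⟩ := hint
  obtain ⟨ε, hε, hεU⟩ := nhds_basis_closedBall.mem_iff.mp hU
  have hr : 0 < ε / 2 := half_pos hε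
  obtain ⟨C, hC⟩ := exists_forall_norm_le_of_integrableOn_closedBall hpos hmeas hsub hr
    (hintU.mono_set (by rwa [mul_div_cancel₀ ε two_ne_zero]))
  set C' := max C 1
  have hglobal := le_sq_mul_exp_of_forall_norm_le (fun x => (hpos x).le) hsub hr
    (le_max_right C 1) fun x hx => (hC x hx).trans (le_max_left C 1)
  refine ⟨C' ^ 2, by positivity, Real.log C' / (ε / 2),
    div_nonneg (Real.log_nonneg (le_max_right C 1)) hr.le, fun x y => ?_⟩
  calc ω (x + y) ≤ ω x * ω y := hsub x y
    _ ≤ C' ^ 2 * Real.exp (Real.log C' / (ε / 2) * ‖x‖) * ω y :=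
      mul_le_mul_of_nonneg_right (hglobal x) (hpos y).le
    _ = C' ^ 2 * ω y * Real.exp (Real.log C' / (ε / 2) * ‖x‖) := by ring
end

section
/- Let ψ : ℝ → ℝ be a positive function with ψ'' ∈ L¹_loc(ℝ) and ∫_{−∞}^∞ (ψ(t) + |ψ'(t)| + |ψ''(t)|) e^{βt + ε|t|} dt < ∞ for some β ≥ 0, ε > 0. Then ∫∫_{ℝ²} |V_γ ψ(x,ξ)| e^{βx + ε|x|} dx dξ < ∞ for any γ ∈ C_c^∞(ℝ), i.e., ψ belongs to the weighted modulation space M¹_{m_ε}(ℝ) with m_ε(x,ξ) = e^{βx+ε|x|}. -/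
open MeasureTheory Filter
open scoped FourierTransform Real

/-- A positive function `ψ` with `ψ'' ∈ L¹_loc` and
`∫ (ψ + |ψ'| + |ψ''|) e^{βt+ε|t|} dt < ∞` belongs to the weighted modulation space
`M¹_{m_ε}(ℝ)` with `m_ε(x,ξ) = e^{βx+ε|x|}`: for every smooth compactly supported window `γ`,
`∬ |V_γ ψ(x,ξ)| e^{βx+ε|x|} dx dξ < ∞`. -/
theorem window_in_weighted_modulation_space (ψ : ℝ → ℝ) (β ε : ℝ)
    (hβ : 0 ≤ β) (hε : 0 < ε)
    (hψpos : ∀ t, 0 < ψ t)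
    (hψdiff : Differentiable ℝ ψ)
    (hψ'diff : Differentiable ℝ (deriv ψ))
    (hψ''loc : LocallyIntegrable (deriv (deriv ψ)))
    (hψint : Integrable (fun t =>
      (ψ t + |deriv ψ t| + |deriv (deriv ψ) t|) * Real.exp (β * t + ε * |t|))) :
    ∀ γ : ℝ → ℂ, ContDiff ℝ (⊤ : ℕ∞) γ → HasCompactSupport γ → γ ≠ 0 →
      Integrable (fun p : ℝ × ℝ =>
        ‖∫ t : ℝ, (ψ t : ℂ) * (starRingEnd ℂ) (γ (t - p.1)) *
            Complex.exp ((-(2 * Real.pi * p.2 * t) : ℝ) * Complex.I)‖ *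
          Real.exp (β * p.1 + ε * |p.1|)) := by
  intro γ hγ hγc _
  set Γ : ℝ → ℂ := fun s => (starRingEnd ℂ) (γ s) with hΓdef
  have hΓ : ContDiff ℝ (⊤ : ℕ∞) Γ := Complex.conjLIE.contDiff.comp (hγ.of_le (by simp))
  have hΓc : HasCompactSupport Γ := hγc.comp_left (map_zero _)
  have hΓ' : ContDiff ℝ (⊤ : ℕ∞) (deriv Γ) := (contDiff_infty_iff_deriv.mp hΓ).2
  have hΓ'' : ContDiff ℝ (⊤ : ℕ∞) (deriv (deriv Γ)) := (contDiff_infty_iff_deriv.mp hΓ').2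
  have hΓd : Differentiable ℝ Γ := (contDiff_infty_iff_deriv.mp hΓ).1
  have hΓ'd : Differentiable ℝ (deriv Γ) := (contDiff_infty_iff_deriv.mp hΓ').1
  have hΓ'c : HasCompactSupport (deriv Γ) := hΓc.deriv
  have hΓ''c : HasCompactSupport (deriv (deriv Γ)) := hΓ'c.deriv
  have hψc : Continuous ψ := hψdiff.continuous
  have hψ'c : Continuous (deriv ψ) := hψ'diff.continuous
  obtain ⟨R, hR0, hR⟩ : ∃ R, 0 < R ∧ tsupport Γ ⊆ Metric.closedBall 0 R := by
    obtain ⟨R, hR0, hR⟩ := (hΓc : IsCompact (tsupport Γ)).isBounded.subset_closedBall_lt 0 0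
    exact ⟨R, hR0, hR⟩
  obtain ⟨M0, hM0⟩ := hΓc.exists_bound_of_continuous hΓ.continuous
  obtain ⟨M1, hM1⟩ := hΓ'c.exists_bound_of_continuous hΓ'.continuous
  obtain ⟨M2, hM2⟩ := hΓ''c.exists_bound_of_continuous hΓ''.continuous
  set M : ℝ := max (max M0 M1) (max M2 1) with hMdef
  have hMpos : 0 < M := lt_of_lt_of_le one_pos ((le_max_right M2 1).trans (le_max_right _ _))
  have hM0' : ∀ s, ‖Γ s‖ ≤ M := fun s =>
    (hM0 s).trans ((le_max_left M0 M1).trans (le_max_left _ _))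
  have hM1' : ∀ s, ‖deriv Γ s‖ ≤ M := fun s =>
    (hM1 s).trans ((le_max_right M0 M1).trans (le_max_left _ _))
  have hM2' : ∀ s, ‖deriv (deriv Γ) s‖ ≤ M := fun s =>
    (hM2 s).trans ((le_max_left M2 1).trans (le_max_right _ _))
  set w : ℝ → ℝ := fun x => Real.exp (β * x + ε * |x|) with hwdef
  have hwcont : Continuous w := by
    exact Real.continuous_exp.comp ((continuous_const.mul continuous_id).add
      (continuous_const.mul continuous_abs))
  have hwpos : ∀ x, 0 < w x := fun x => Real.exp_pos _
  set Φ : ℝ → ℝ := fun t => ψ t + |deriv ψ t| + |deriv (deriv ψ) t| with hΦdef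
  have hΦnn : ∀ t, 0 ≤ Φ t := fun t => by
    have := (hψpos t).le
    have := abs_nonneg (deriv ψ t)
    have := abs_nonneg (deriv (deriv ψ) t)
    dsimp [Φ]; linarith
  have hΦm : Measurable Φ :=
    ((hψc.measurable.add hψ'c.measurable.abs).add (measurable_deriv (deriv ψ)).abs)
  have hΦint : ∀ x : ℝ, IntegrableOn Φ (Metric.closedBall x R) := by
    intro x
    have h1 : IntegrableOn ψ (Metric.closedBall x R) :=
      hψc.locallyIntegrable.integrableOn_isCompact (isCompact_closedBall _ _)
    have h2 : IntegrableOn (fun t => |deriv ψ t|) (Metric.closedBall x R) :=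
      (hψ'c.locallyIntegrable.integrableOn_isCompact (isCompact_closedBall _ _)).abs
    have h3 : IntegrableOn (fun t => |deriv (deriv ψ) t|) (Metric.closedBall x R) :=
      (hψ''loc.integrableOn_isCompact (isCompact_closedBall _ _)).abs
    exact (h1.add h2).add h3
  set F : ℝ → ℝ := fun t => Φ t * w t with hFdef
  have hF : Integrable F := hψint
  have hFm : Measurable F := hΦm.mul hwcont.measurable
  set K : ℝ → ℝ := fun x => ∫ t in Metric.closedBall x R, F t with hKdef
  -- Integrability of K
  have hKint : Integrable K := by
    set S : Set (ℝ × ℝ) := {q | |q.2 - q.1| ≤ R} with hSdef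
    have hSm : MeasurableSet S :=
      (isClosed_le ((continuous_snd.sub continuous_fst).abs) continuous_const).measurableSet
    set f2 : ℝ × ℝ → ℝ := S.indicator (fun q => F q.2) with hf2def
    have hf2m : AEStronglyMeasurable f2 (volume.prod volume) :=
      (((hFm.comp measurable_snd).indicator hSm)).aestronglyMeasurable
    have hsec : ∀ t : ℝ, (fun x' => f2 (x', t)) =
        (Metric.closedBall t R).indicator (fun _ => F t) := by
      intro t
      funext x'
      by_cases h : |x' - t| ≤ R
      · have h1 : (x', t) ∈ S := by simpa [S, abs_sub_comm] using h
        have h2 : x' ∈ Metric.closedBall t R := by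
          simpa [Metric.mem_closedBall, Real.dist_eq] using h
        rw [Set.indicator_of_mem h2]
        exact Set.indicator_of_mem h1 _
      · have h1 : (x', t) ∉ S := by simpa [S, abs_sub_comm] using h
        have h2 : x' ∉ Metric.closedBall t R := by
          simpa [Metric.mem_closedBall, Real.dist_eq] using h
        rw [Set.indicator_of_notMem h2]
        exact Set.indicator_of_notMem h1 _
    have hf2int : Integrable f2 (volume.prod volume) := by
      rw [integrable_prod_iff' hf2m]
      constructor
      · refine Eventually.of_forall fun t => ?_
        rw [hsec t]
        rw [integrable_indicator_iff measurableSet_closedBall]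
        exact (integrableOn_const_iff (C := F t)).mpr (Or.inr (by rw [Real.volume_closedBall]; exact ENNReal.ofReal_lt_top))
      · have : (fun t : ℝ => ∫ x', ‖f2 (x', t)‖) = fun t => ‖F t‖ * (2 * R) := by
          funext t
          have h1 : ∀ x' : ℝ, ‖f2 (x', t)‖ =
              (Metric.closedBall t R).indicator (fun _ => ‖F t‖) x' := by
            intro x'
            rw [congrFun (hsec t) x', norm_indicator_eq_indicator_norm]
          simp only [h1]
          rw [integral_indicator measurableSet_closedBall, setIntegral_const,
            Real.volume_real_closedBall hR0.le]
          rw [smul_eq_mul]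
          ring
        rw [this]
        exact hF.norm.mul_const _
    have hK_eq : K = fun x => ∫ t, f2 (x, t) := by
      funext x
      show (∫ t in Metric.closedBall x R, F t) = ∫ t, f2 (x, t)
      rw [← integral_indicator measurableSet_closedBall]
      refine integral_congr_ae (Eventually.of_forall fun t => ?_)
      by_cases h : |t - x| ≤ R
      · have h1 : (x, t) ∈ S := by simpa [S] using h
        have h2 : t ∈ Metric.closedBall x R := by
          simpa [Metric.mem_closedBall, Real.dist_eq] using h
        rw [Set.indicator_of_mem h2]
        exact (Set.indicator_of_mem h1 (fun q => F q.2)).symm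
      · have h1 : (x, t) ∉ S := by simpa [S] using h
        have h2 : t ∉ Metric.closedBall x R := by
          simpa [Metric.mem_closedBall, Real.dist_eq] using h
        rw [Set.indicator_of_notMem h2]
        exact (Set.indicator_of_notMem h1 (fun q => F q.2)).symm
    rw [hK_eq]
    exact hf2int.integral_prod_left
  -- the main pointwise bound
  have main : ∀ x ξ : ℝ,
      (1 + ξ ^ 2) * ‖∫ t : ℝ, (ψ t : ℂ) * Γ (t - x) *
          Complex.exp ((-(2 * Real.pi * ξ * t) : ℝ) * Complex.I)‖ ≤
        3 * M * ∫ t in Metric.closedBall x R, Φ t := by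
    intro x ξ
    have hΓx : HasCompactSupport fun t : ℝ => Γ (t - x) :=
      hΓc.comp_homeomorph (Homeomorph.subRight x)
    have hΓ'x : HasCompactSupport fun t : ℝ => deriv Γ (t - x) :=
      hΓ'c.comp_homeomorph (Homeomorph.subRight x)
    have hΓ''x : HasCompactSupport fun t : ℝ => deriv (deriv Γ) (t - x) :=
      hΓ''c.comp_homeomorph (Homeomorph.subRight x)
    have hcΓx : Continuous fun t : ℝ => Γ (t - x) :=
      hΓ.continuous.comp (continuous_id.sub continuous_const)
    have hcΓ'x : Continuous fun t : ℝ => deriv Γ (t - x) :=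
      hΓ'.continuous.comp (continuous_id.sub continuous_const)
    have hcΓ''x : Continuous fun t : ℝ => deriv (deriv Γ) (t - x) :=
      hΓ''.continuous.comp (continuous_id.sub continuous_const)
    set g : ℝ → ℂ := fun t => (ψ t : ℂ) * Γ (t - x) with hgdef
    set g1 : ℝ → ℂ := fun t =>
      ((deriv ψ t : ℝ) : ℂ) * Γ (t - x) + (ψ t : ℂ) * deriv Γ (t - x) with hg1def
    set g2 : ℝ → ℂ := fun t =>
      (((deriv (deriv ψ) t : ℝ) : ℂ) * Γ (t - x) + ((deriv ψ t : ℝ) : ℂ) * deriv Γ (t - x)) +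
      (((deriv ψ t : ℝ) : ℂ) * deriv Γ (t - x) + (ψ t : ℂ) * deriv (deriv Γ) (t - x)) with hg2def
    have hsub : ∀ t : ℝ, HasDerivAt (fun t : ℝ => t - x) 1 t := fun t => by
      simpa using (hasDerivAt_id t).sub_const x
    have hd1 : ∀ t, HasDerivAt g (g1 t) t := by
      intro t
      have h1 : HasDerivAt (fun t : ℝ => ((ψ t : ℂ))) (((deriv ψ t : ℝ) : ℂ)) t :=
        (hψdiff t).hasDerivAt.ofReal_comp
      have h2 : HasDerivAt (fun t : ℝ => Γ (t - x)) (deriv Γ (t - x)) t :=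
        ((hΓd (t - x)).hasDerivAt).comp_sub_const t x
      exact h1.mul h2
    have hd2 : ∀ t, HasDerivAt g1 (g2 t) t := by
      intro t
      have h1 : HasDerivAt (fun t : ℝ => ((ψ t : ℂ))) (((deriv ψ t : ℝ) : ℂ)) t :=
        (hψdiff t).hasDerivAt.ofReal_comp
      have h1' : HasDerivAt (fun t : ℝ => (((deriv ψ t : ℝ) : ℂ))) (((deriv (deriv ψ) t : ℝ) : ℂ)) t :=
        (hψ'diff t).hasDerivAt.ofReal_comp
      have h2 : HasDerivAt (fun t : ℝ => Γ (t - x)) (deriv Γ (t - x)) t :=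
        ((hΓd (t - x)).hasDerivAt).comp_sub_const t x
      have h2' : HasDerivAt (fun t : ℝ => deriv Γ (t - x)) (deriv (deriv Γ) (t - x)) t :=
        ((hΓ'd (t - x)).hasDerivAt).comp_sub_const t x
      exact (h1'.mul h2).add (h1.mul h2')
    have hdg : deriv g = g1 := funext fun t => (hd1 t).deriv
    have hdg1 : deriv g1 = g2 := funext fun t => (hd2 t).deriv
    have hgi : Integrable g :=
      ((Complex.continuous_ofReal.comp hψc).mul hcΓx).integrable_of_hasCompactSupport
        hΓx.mul_left
    have hg1i : Integrable g1 := by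
      refine Continuous.integrable_of_hasCompactSupport ?_ ?_
      · exact ((Complex.continuous_ofReal.comp hψ'c).mul hcΓx).add
          ((Complex.continuous_ofReal.comp hψc).mul hcΓ'x)
      · exact (hΓx.mul_left).add (hΓ'x.mul_left)
    have hg2i : Integrable g2 := by
      have e1 : Integrable fun t : ℝ => ((deriv (deriv ψ) t : ℝ) : ℂ) * Γ (t - x) := by
        have := hψ''loc.integrable_smul_right_of_hasCompactSupport hcΓx hΓx
        simpa [Complex.real_smul] using this
      have e2 : Integrable fun t : ℝ => ((deriv ψ t : ℝ) : ℂ) * deriv Γ (t - x) :=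
        ((Complex.continuous_ofReal.comp hψ'c).mul hcΓ'x).integrable_of_hasCompactSupport
          hΓ'x.mul_left
      have e3 : Integrable fun t : ℝ => (ψ t : ℂ) * deriv (deriv Γ) (t - x) :=
        ((Complex.continuous_ofReal.comp hψc).mul hcΓ''x).integrable_of_hasCompactSupport
          hΓ''x.mul_left
      exact (e1.add e2).add (e2.add e3)
    have hVeq : (∫ t : ℝ, (ψ t : ℂ) * Γ (t - x) *
        Complex.exp ((-(2 * Real.pi * ξ * t) : ℝ) * Complex.I)) = 𝓕 g ξ := by
      rw [Real.fourier_real_eq_integral_exp_smul]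
      refine integral_congr_ae (Eventually.of_forall fun t => ?_)
      have harg : ((-2 * Real.pi * t * ξ : ℝ) : ℂ) = ((-(2 * Real.pi * ξ * t) : ℝ) : ℂ) := by
        push_cast
        ring
      dsimp only
      rw [smul_eq_mul, harg]
      ring
    have hF1 := Real.fourier_deriv hgi (fun t => (hd1 t).differentiableAt)
      (by rw [hdg]; exact hg1i)
    have hF2 := Real.fourier_deriv (f := deriv g) (by rw [hdg]; exact hg1i)
      (by rw [hdg]; exact fun t => (hd2 t).differentiableAt)
      (by rw [hdg, hdg1]; exact hg2i)
    have hnormc : ‖(2 * (Real.pi : ℂ) * Complex.I * (ξ : ℂ))‖ = 2 * Real.pi * |ξ| := by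
      simp [norm_mul, Complex.norm_real, abs_of_pos Real.pi_pos]
    have hnorm2 : ‖𝓕 g2 ξ‖ = (2 * Real.pi * |ξ|) ^ 2 * ‖𝓕 g ξ‖ := by
      have hgg : g2 = deriv (deriv g) := by rw [hdg, hdg1]
      rw [hgg, congrFun hF2 ξ, congrFun hF1 ξ, norm_smul, norm_smul, hnormc]
      ring
    have hn1 : ‖𝓕 g ξ‖ ≤ ∫ t, ‖g t‖ :=
      VectorFourier.norm_fourierIntegral_le_integral_norm _ _ _ _ _
    have hn2 : ‖𝓕 g2 ξ‖ ≤ ∫ t, ‖g2 t‖ :=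
      VectorFourier.norm_fourierIntegral_le_integral_norm _ _ _ _ _
    have hts1 : tsupport (deriv Γ) ⊆ tsupport Γ :=
      closure_minimal support_deriv_subset (isClosed_tsupport Γ)
    have hts2 : tsupport (deriv (deriv Γ)) ⊆ tsupport (deriv Γ) :=
      closure_minimal support_deriv_subset (isClosed_tsupport _)
    have hptw : ∀ t : ℝ, ‖g t‖ + ‖g2 t‖ ≤
        (Metric.closedBall x R).indicator (fun t => 3 * M * Φ t) t := by
      intro t
      by_cases ht : t ∈ Metric.closedBall x R
      · rw [Set.indicator_of_mem ht]
        have e0 : ‖g t‖ ≤ ψ t * M := by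
          calc ‖g t‖ = |ψ t| * ‖Γ (t - x)‖ := by
                rw [hgdef]; dsimp only; rw [norm_mul, Complex.norm_real, Real.norm_eq_abs]
            _ ≤ ψ t * M := by
                rw [abs_of_pos (hψpos t)]
                exact mul_le_mul_of_nonneg_left (hM0' _) (hψpos t).le
        have eb : ∀ (a : ℝ) (z : ℂ) (Mz : ℝ), ‖z‖ ≤ Mz → ‖(a : ℂ) * z‖ ≤ |a| * Mz := by
          intro a z Mz hz
          rw [norm_mul, Complex.norm_real, Real.norm_eq_abs]
          exact mul_le_mul_of_nonneg_left hz (abs_nonneg a)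
        have e1 : ‖g2 t‖ ≤ (|deriv (deriv ψ) t| * M + |deriv ψ t| * M) +
            (|deriv ψ t| * M + |ψ t| * M) := by
          refine (norm_add_le _ _).trans (add_le_add
            ((norm_add_le _ _).trans (add_le_add ?_ ?_))
            ((norm_add_le _ _).trans (add_le_add ?_ ?_)))
          · exact eb _ _ _ (hM0' _)
          · exact eb _ _ _ (hM1' _)
          · exact eb _ _ _ (hM1' _)
          · exact eb _ _ _ (hM2' _)
        rw [abs_of_pos (hψpos t)] at e1
        have hΦt : Φ t = ψ t + |deriv ψ t| + |deriv (deriv ψ) t| := rfl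
        rw [hΦt]
        nlinarith [hMpos.le, (hψpos t).le, abs_nonneg (deriv ψ t),
          abs_nonneg (deriv (deriv ψ) t)]
      · rw [Set.indicator_of_notMem ht]
        have hmem : t - x ∉ tsupport Γ := by
          intro hmem
          refine ht ?_
          have h := hR hmem
          rw [Metric.mem_closedBall, Real.dist_eq] at h ⊢
          simpa using h
        have z0 : Γ (t - x) = 0 := image_eq_zero_of_notMem_tsupport hmem
        have z1 : deriv Γ (t - x) = 0 :=
          image_eq_zero_of_notMem_tsupport fun h => hmem (hts1 h)
        have z2 : deriv (deriv Γ) (t - x) = 0 :=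
          image_eq_zero_of_notMem_tsupport fun h => hmem (hts1 (hts2 h))
        simp [hgdef, hg2def, z0, z1, z2]
    have hint : (∫ t, ‖g t‖) + (∫ t, ‖g2 t‖) ≤
        3 * M * ∫ t in Metric.closedBall x R, Φ t := by
      have hindint : Integrable ((Metric.closedBall x R).indicator fun t => 3 * M * Φ t) := by
        rw [integrable_indicator_iff measurableSet_closedBall]
        exact (hΦint x).const_mul _
      calc (∫ t, ‖g t‖) + (∫ t, ‖g2 t‖) = ∫ t, (‖g t‖ + ‖g2 t‖) :=
            (integral_add hgi.norm hg2i.norm).symm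
        _ ≤ ∫ t, (Metric.closedBall x R).indicator (fun t => 3 * M * Φ t) t :=
            integral_mono (hgi.norm.add hg2i.norm) hindint hptw
        _ = ∫ t in Metric.closedBall x R, 3 * M * Φ t :=
            integral_indicator measurableSet_closedBall
        _ = 3 * M * ∫ t in Metric.closedBall x R, Φ t := integral_const_mul _ _
    have hsq : ξ ^ 2 * ‖𝓕 g ξ‖ ≤ ‖𝓕 g2 ξ‖ := by
      rw [hnorm2]
      have h1 : ξ ^ 2 ≤ (2 * Real.pi * |ξ|) ^ 2 := by
        have h2 : (2 * Real.pi * |ξ|) ^ 2 = (2 * Real.pi) ^ 2 * ξ ^ 2 := by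
          rw [mul_pow, sq_abs]
        rw [h2]
        have h3 : (1:ℝ) ≤ (2 * Real.pi) ^ 2 := by nlinarith [Real.pi_gt_three]
        nlinarith [sq_nonneg ξ, h3]
      exact mul_le_mul_of_nonneg_right h1 (norm_nonneg _)
    rw [hVeq]
    calc (1 + ξ ^ 2) * ‖𝓕 g ξ‖ = ‖𝓕 g ξ‖ + ξ ^ 2 * ‖𝓕 g ξ‖ := by ring
      _ ≤ (∫ t, ‖g t‖) + (∫ t, ‖g2 t‖) := add_le_add hn1 (hsq.trans hn2)
      _ ≤ 3 * M * ∫ t in Metric.closedBall x R, Φ t := hint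
  -- weighted bound
  have hKw : ∀ x : ℝ, (∫ t in Metric.closedBall x R, Φ t) * w x ≤
      Real.exp ((β + ε) * R) * K x := by
    intro x
    have hmono : ∫ t in Metric.closedBall x R, Φ t * w x ≤
        ∫ t in Metric.closedBall x R, Real.exp ((β + ε) * R) * F t := by
      refine setIntegral_mono_on ((hΦint x).mul_const _)
        ((hF.integrableOn).const_mul _) measurableSet_closedBall ?_
      intro t ht
      have hdist : |t - x| ≤ R := by
        rw [Metric.mem_closedBall, Real.dist_eq] at ht; exact ht
      have hln : β * x + ε * |x| ≤ (β * t + ε * |t|) + (β + ε) * R := by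
        have h1 : x - t ≤ |t - x| := by rw [abs_sub_comm]; exact le_abs_self _
        have h2 : |x| - |t| ≤ |t - x| := by rw [abs_sub_comm]; exact abs_sub_abs_le_abs_sub x t
        nlinarith [abs_nonneg (t - x)]
      have hw : w x ≤ Real.exp ((β + ε) * R) * w t := by
        rw [hwdef]
        dsimp only
        rw [← Real.exp_add]
        exact Real.exp_le_exp.mpr (by linarith)
      calc Φ t * w x ≤ Φ t * (Real.exp ((β + ε) * R) * w t) :=
            mul_le_mul_of_nonneg_left hw (hΦnn t)
        _ = Real.exp ((β + ε) * R) * F t := by rw [hFdef]; ring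
    calc (∫ t in Metric.closedBall x R, Φ t) * w x
        = ∫ t in Metric.closedBall x R, Φ t * w x := (integral_mul_const _ _).symm
      _ ≤ ∫ t in Metric.closedBall x R, Real.exp ((β + ε) * R) * F t := hmono
      _ = Real.exp ((β + ε) * R) * K x := integral_const_mul _ _
  -- now conclude
  set C : ℝ := 3 * M * Real.exp ((β + ε) * R) with hCdef
  have hbound : ∀ p : ℝ × ℝ,
      ‖∫ t : ℝ, (ψ t : ℂ) * Γ (t - p.1) *
          Complex.exp ((-(2 * Real.pi * p.2 * t) : ℝ) * Complex.I)‖ * w p.1 ≤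
        (C * K p.1) * (1 + p.2 ^ 2)⁻¹ := by
    intro p
    obtain ⟨x, ξ⟩ := p
    dsimp only
    have h1 : (1 + ξ ^ 2) * (‖∫ t : ℝ, (ψ t : ℂ) * Γ (t - x) *
        Complex.exp ((-(2 * Real.pi * ξ * t) : ℝ) * Complex.I)‖ * w x) ≤ C * K x := by
      calc (1 + ξ ^ 2) * (‖∫ t : ℝ, (ψ t : ℂ) * Γ (t - x) *
            Complex.exp ((-(2 * Real.pi * ξ * t) : ℝ) * Complex.I)‖ * w x)
          ≤ (3 * M * ∫ t in Metric.closedBall x R, Φ t) * w x := by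
            rw [← mul_assoc]
            exact mul_le_mul_of_nonneg_right (main x ξ) (hwpos x).le
        _ = 3 * M * ((∫ t in Metric.closedBall x R, Φ t) * w x) := by ring
        _ ≤ 3 * M * (Real.exp ((β + ε) * R) * K x) := by
            refine mul_le_mul_of_nonneg_left (hKw x) (by positivity)
        _ = C * K x := by rw [hCdef]; ring
    have hpos : (0:ℝ) < 1 + ξ ^ 2 := by positivity
    exact ((le_div_iff₀' hpos).mpr h1).trans_eq (div_eq_mul_inv _ _)
  -- integrable bound
  have hboundint : Integrable (fun p : ℝ × ℝ => (C * K p.1) * (1 + p.2 ^ 2)⁻¹) := by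
    rw [MeasureTheory.Measure.volume_eq_prod]
    exact (hKint.const_mul C).mul_prod integrable_inv_one_add_sq
  -- measurability of the target
  have hmeas : AEStronglyMeasurable (fun p : ℝ × ℝ =>
      ‖∫ t : ℝ, (ψ t : ℂ) * Γ (t - p.1) *
          Complex.exp ((-(2 * Real.pi * p.2 * t) : ℝ) * Complex.I)‖ * w p.1) volume := by
    have hcont : Continuous fun q : (ℝ × ℝ) × ℝ =>
        (ψ q.2 : ℂ) * Γ (q.2 - q.1.1) *
          Complex.exp ((-(2 * Real.pi * q.1.2 * q.2) : ℝ) * Complex.I) := by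
      refine ((Complex.continuous_ofReal.comp (hψc.comp continuous_snd)).mul
        (hΓ.continuous.comp (continuous_snd.sub (continuous_fst.fst)))).mul
        (Complex.continuous_exp.comp ?_)
      exact (Complex.continuous_ofReal.comp (by fun_prop)).mul continuous_const
    have hsm : StronglyMeasurable fun p : ℝ × ℝ => ∫ t : ℝ, (ψ t : ℂ) * Γ (t - p.1) *
        Complex.exp ((-(2 * Real.pi * p.2 * t) : ℝ) * Complex.I) := by
      exact hcont.stronglyMeasurable.integral_prod_right' 
    exact (hsm.norm.mul (hwcont.comp continuous_fst).stronglyMeasurable).aestronglyMeasurable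
  refine Integrable.mono' hboundint hmeas (Eventually.of_forall fun p => ?_)
  have h0 : 0 ≤ ‖∫ t : ℝ, (ψ t : ℂ) * Γ (t - p.1) *
      Complex.exp ((-(2 * Real.pi * p.2 * t) : ℝ) * Complex.I)‖ * w p.1 :=
    mul_nonneg (norm_nonneg _) (hwpos _).le
  rw [Real.norm_of_nonneg h0]
  exact hbound p
end

section
/- Let ψ, γ ∈ L²(ℝⁿ) with (γ, ψ)_{L²} ≠ 0. Then for every f in the Schwartz class 𝒮(ℝⁿ), the inversion formula holds pointwise: f(t) = (1/(γ,ψ)_{L²}) ∫∫_{ℝ²ⁿ} V_ψf(x,ξ) e^{2πiξ·t} γ(t−x) dξ dx, where the double integral converges absolutely when ψ, γ ∈ 𝒮(ℝⁿ). -/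
open MeasureTheory Real RealInnerProductSpace SchwartzMap

/-- The short-time Fourier transform `V_ψ f (x, ξ) = ∫ f(t) conj(ψ(t-x)) e^{-2πi ξ·t} dt`. -/
noncomputable def STFT {n : ℕ} (f ψ : EuclideanSpace ℝ (Fin n) → ℂ)
    (x ξ : EuclideanSpace ℝ (Fin n)) : ℂ :=
  ∫ t, f t * (starRingEnd ℂ) (ψ (t - x)) *
    Complex.exp ((-(2 * Real.pi * ⟪ξ, t⟫) : ℝ) * Complex.I)

/-! For fixed `x`, `V_ψ f (x, ·)` is the Fourier transform of the Schwartz function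
`g_x = f · conj ψ(· - x)`, so Fourier inversion gives
`∫ V_ψ f(x, ξ) e^{2πiξ·t} dξ = f(t) conj ψ(t - x)`, and integrating this against `γ(t - x)` in `x`
yields `f(t) (γ, ψ)`. The exchange of integrals is justified because the family `(g_x)_x` is
bounded in `𝓢` (the Leibniz rule only involves weight-free seminorms of the translates of `ψ`),
hence so is its image under the continuous Fourier transform, which gives
`|V_ψ f(x, ξ)| ≤ C (1 + |ξ|)^{-(n+1)}` uniformly in `x`. -/

open FourierTransform

namespace SchwartzMap

lemma exists_one_add_norm_pow_mul_le_of_isVonNBounded {E F : Type*} [NormedAddCommGroup E]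
    [NormedSpace ℝ E] [NormedAddCommGroup F] [NormedSpace ℝ F] {B : Set 𝓢(E, F)}
    (hB : Bornology.IsVonNBounded ℝ B) (N : ℕ) :
    ∃ C, ∀ g ∈ B, ∀ ξ, (1 + ‖ξ‖) ^ N * ‖g ξ‖ ≤ C := by
  obtain ⟨r, -, hr⟩ := ((schwartz_withSeminorms ℝ E F).isVonNBounded_iff_finset_seminorm_bounded).1
    hB (Finset.Iic (N, 0))
  refine ⟨2 ^ N * r, fun g hg ξ ↦ ?_⟩
  simpa using (one_add_le_sup_seminorm_apply (𝕜 := ℝ) (m := (N, 0)) le_rfl le_rfl g ξ).trans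
    (mul_le_mul_of_nonneg_left (hr g hg).le (by positivity))

section Window

variable {E : Type*} [NormedAddCommGroup E] [NormedSpace ℝ E]

noncomputable def conjTranslate (ψ : 𝓢(E, ℂ)) (x : E) : 𝓢(E, ℂ) :=
  (ψ.compSubConstCLM ℝ x).postcompCLM Complex.conjCLE.toContinuousLinearMap

lemma norm_iteratedFDeriv_conjTranslate (ψ : 𝓢(E, ℂ)) (x s : E) (m : ℕ) :
    ‖iteratedFDeriv ℝ m (conjTranslate ψ x) s‖ = ‖iteratedFDeriv ℝ m ψ (s - x)‖ := by
  rw [← iteratedFDeriv_comp_sub]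
  exact Complex.conjLIE.norm_iteratedFDeriv_comp_left (fun y ↦ ψ (y - x)) s m

noncomputable def windowed (f ψ : 𝓢(E, ℂ)) (x : E) : 𝓢(E, ℂ) :=
  pairing (ContinuousLinearMap.mul ℝ ℂ) f (conjTranslate ψ x)

@[simp] lemma windowed_apply (f ψ : 𝓢(E, ℂ)) (x s : E) :
    windowed f ψ x s = f s * starRingEnd ℂ (ψ (s - x)) := rfl

lemma seminorm_windowed_le (f ψ : 𝓢(E, ℂ)) (x : E) (k j : ℕ) :
    SchwartzMap.seminorm ℝ k j (windowed f ψ x) ≤ ∑ i ∈ Finset.range (j + 1),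
      (j.choose i : ℝ) * SchwartzMap.seminorm ℝ k i f * SchwartzMap.seminorm ℝ 0 (j - i) ψ := by
  refine seminorm_le_bound ℝ k j _ (by positivity) fun s ↦ ?_
  have hleibniz := norm_iteratedFDeriv_mul_le (𝕜 := ℝ) (f.smooth ⊤)
    ((conjTranslate ψ x).smooth ⊤) s (n := j) (by exact_mod_cast le_top)
  calc ‖s‖ ^ k * ‖iteratedFDeriv ℝ j (windowed f ψ x) s‖
      ≤ ‖s‖ ^ k * ∑ i ∈ Finset.range (j + 1), (j.choose i : ℝ) * ‖iteratedFDeriv ℝ i f s‖ *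
          ‖iteratedFDeriv ℝ (j - i) (conjTranslate ψ x) s‖ := by gcongr; exact hleibniz
    _ = ∑ i ∈ Finset.range (j + 1), (j.choose i : ℝ) * (‖s‖ ^ k * ‖iteratedFDeriv ℝ i f s‖) *
          ‖iteratedFDeriv ℝ (j - i) ψ (s - x)‖ := by
        simp_rw [Finset.mul_sum, norm_iteratedFDeriv_conjTranslate]
        ring_nf
    _ ≤ _ := by
        gcongr with i
        · exact le_seminorm ℝ k i f s
        · simpa using le_seminorm ℝ 0 (j - i) ψ (s - x)

lemma isVonNBounded_range_windowed (f ψ : 𝓢(E, ℂ)) :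
    Bornology.IsVonNBounded ℝ (Set.range (windowed f ψ)) := by
  rw [(schwartz_withSeminorms ℝ E ℂ).isVonNBounded_iff_seminorm_bounded]
  rintro ⟨k, j⟩
  have hbound x := (seminorm_windowed_le f ψ x k j).trans_lt (lt_add_one _)
  refine ⟨_, (apply_nonneg _ _).trans_lt (hbound 0), ?_⟩
  rintro _ ⟨x, rfl⟩
  exact hbound x

end Window

section Fourier

variable {V : Type*} [NormedAddCommGroup V] [InnerProductSpace ℝ V] [FiniteDimensional ℝ V]
  [MeasurableSpace V] [BorelSpace V]

lemma fourierInv_fourier_apply {F : Type*} [NormedAddCommGroup F] [NormedSpace ℂ F]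
    [CompleteSpace F] (g : 𝓢(V, F)) (t : V) : 𝓕⁻ (𝓕 (g : V → F)) t = g t := by
  rw [g.continuous.fourierInv_fourier_eq g.integrable]
  simpa [fourier_coe] using (𝓕 g).integrable

lemma exists_one_add_norm_pow_mul_fourier_windowed_le (f ψ : 𝓢(V, ℂ)) (N : ℕ) :
    ∃ C, ∀ x ξ, (1 + ‖ξ‖) ^ N * ‖𝓕 (windowed f ψ x : V → ℂ) ξ‖ ≤ C := by
  obtain ⟨C, hC⟩ := exists_one_add_norm_pow_mul_le_of_isVonNBounded
    ((isVonNBounded_range_windowed f ψ).image (fourierTransformCLM ℝ)) N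
  exact ⟨C, fun x ↦ hC _ ⟨_, ⟨x, rfl⟩, rfl⟩⟩

end Fourier

end SchwartzMap

section STFT

variable {n : ℕ}

local notation "𝔼" => EuclideanSpace ℝ (Fin n)

lemma stft_eq_fourier_windowed (f ψ : 𝓢(𝔼, ℂ)) (x ξ : 𝔼) :
    STFT f ψ x ξ = 𝓕 (windowed f ψ x : 𝔼 → ℂ) ξ := by
  rw [Real.fourier_eq', STFT]
  congr 1 with t
  rw [windowed_apply, smul_eq_mul, real_inner_comm]
  push_cast
  ring_nf

lemma continuous_stft {f ψ : 𝔼 → ℂ} (hf : Integrable f) (hψ : Continuous ψ) {M : ℝ}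
    (hψM : ∀ s, ‖ψ s‖ ≤ M) : Continuous fun p : 𝔼 × 𝔼 ↦ STFT f ψ p.1 p.2 := by
  refine continuous_of_dominated (bound := fun t ↦ ‖f t‖ * M) (fun p ↦ ?_) (fun p ↦ ?_)
    (hf.norm.mul_const M) (ae_of_all _ fun t ↦ by fun_prop)
  · exact (hf.aestronglyMeasurable.mul (by fun_prop)).mul (by fun_prop)
  · refine ae_of_all _ fun t ↦ ?_
    rw [norm_mul, norm_mul, Complex.norm_exp_ofReal_mul_I, mul_one, Complex.norm_conj]
    gcongr
    exact hψM _

lemma exists_norm_stft_le (f ψ : 𝓢(𝔼, ℂ)) (N : ℕ) :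
    ∃ C, ∀ x ξ, ‖STFT f ψ x ξ‖ ≤ C * (1 + ‖ξ‖) ^ (-(N : ℝ)) := by
  obtain ⟨C, hC⟩ := exists_one_add_norm_pow_mul_fourier_windowed_le f ψ N
  refine ⟨C, fun x ξ ↦ ?_⟩
  rw [Real.rpow_neg (by positivity), Real.rpow_natCast, ← div_eq_mul_inv,
    le_div_iff₀' (by positivity), stft_eq_fourier_windowed]
  exact hC x ξ

lemma integrable_stft_mul (f ψ : 𝓢(𝔼, ℂ)) {γ : 𝔼 → ℂ} (hγ : Integrable γ) (t : 𝔼) :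
    Integrable fun p : 𝔼 × 𝔼 ↦ STFT f ψ p.1 p.2 *
      Complex.exp (((2 * π * ⟪p.2, t⟫) : ℝ) * Complex.I) * γ (t - p.1) := by
  obtain ⟨C, hC⟩ := exists_norm_stft_le f ψ (n + 1)
  have hdecay : Integrable fun ξ : 𝔼 ↦ (1 + ‖ξ‖) ^ (-((n + 1 : ℕ) : ℝ)) :=
    integrable_one_add_norm (by simp)
  rw [Measure.volume_eq_prod]
  refine ((hγ.comp_sub_left t).norm.mul_prod (hdecay.const_mul C)).mono' ?_ (ae_of_all _ ?_)
  · exact (((continuous_stft f.integrable ψ.continuous (ψ.norm_le_seminorm ℝ)).mul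
      (by fun_prop)).aestronglyMeasurable).mul (hγ.comp_sub_left t).aestronglyMeasurable.comp_fst
  · rintro ⟨x, ξ⟩
    rw [norm_mul, norm_mul, Complex.norm_exp_ofReal_mul_I, mul_one, mul_comm]
    gcongr
    exact hC x ξ

lemma integral_stft_mul_exp (f ψ : 𝓢(𝔼, ℂ)) (x t : 𝔼) :
    ∫ ξ, STFT f ψ x ξ * Complex.exp (((2 * π * ⟪ξ, t⟫) : ℝ) * Complex.I) =
      f t * starRingEnd ℂ (ψ (t - x)) := by
  rw [← windowed_apply, ← fourierInv_fourier_apply, Real.fourierInv_eq']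
  simp_rw [stft_eq_fourier_windowed, smul_eq_mul, mul_comm]

end STFT

/-- STFT inversion formula on the Schwartz class, pointwise with absolute convergence:
`f(t) = (γ,ψ)⁻¹ ∬ V_ψ f(x,ξ) e^{2πi ξ·t} γ(t-x) dξ dx` whenever `(γ,ψ)_{L²} ≠ 0`. -/
theorem stft_inversion {n : ℕ} (f ψ γ : 𝓢(EuclideanSpace ℝ (Fin n), ℂ))
    (hip : (∫ t, γ t * (starRingEnd ℂ) (ψ t)) ≠ 0) :
    ∀ t : EuclideanSpace ℝ (Fin n),
      Integrable (fun p : EuclideanSpace ℝ (Fin n) × EuclideanSpace ℝ (Fin n) =>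
        STFT (⇑f) (⇑ψ) p.1 p.2 *
          Complex.exp (((2 * Real.pi * ⟪p.2, t⟫) : ℝ) * Complex.I) * γ (t - p.1)) ∧
      f t = (∫ t', γ t' * (starRingEnd ℂ) (ψ t'))⁻¹ *
        ∫ p : EuclideanSpace ℝ (Fin n) × EuclideanSpace ℝ (Fin n),
          STFT (⇑f) (⇑ψ) p.1 p.2 *
            Complex.exp (((2 * Real.pi * ⟪p.2, t⟫) : ℝ) * Complex.I) * γ (t - p.1) := by
  intro t
  have hintegrable := integrable_stft_mul f ψ γ.integrable t
  refine ⟨hintegrable, ?_⟩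
  have hpairing : ∫ x, f t * starRingEnd ℂ (ψ (t - x)) * γ (t - x) =
      f t * ∫ s, γ s * starRingEnd ℂ (ψ s) := by
    simp_rw [mul_assoc, integral_const_mul, mul_comm (starRingEnd ℂ _)]
    exact congrArg _ (integral_sub_left_eq_self (fun s ↦ γ s * starRingEnd ℂ (ψ s)) volume t)
  rw [Measure.volume_eq_prod, integral_prod _ (by rwa [← Measure.volume_eq_prod])]
  simp_rw [integral_mul_const, integral_stft_mul_exp, hpairing]
  field_simp
end
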